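/- arXiv:2011.14482 — 2 statements merged into one kernel-verified Lean document; each statement's English description precedes it below -/
import Mathlib

section
/- Let Q be a simple binary join query with input size m, λ ∈ [1, m] an integer, H ⊆ attset(Q), L = attset(Q) \ H, and I the set of isolated attributes. For every configuration η ∈ config(Q, H), Join(Q'(η)) = Join(Q''(η)) = Join(Q''_isolated(η)) × Join(Q''_light(η)), where the right-hand side denotes the set of tuples over L obtained by combining a tuple of Join(Q''_isolated(η)) (over I) with a tuple of Join(Q''_light(η)) (over L \ I). -/
open scoped BigOperators Classical

namespace BinaryJoins

/-! ### Hypergraphs, fractional edge coverings and packings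

A hypergraph is given by a finite vertex set `V : Finset α` and a finite
edge set `E : Finset (Finset α)`.  A weight assignment is a function
`W : Finset α → ℝ` (only its values on `E` matter). -/

variable {α : Type} [DecidableEq α]

/-- The weight of a vertex `X`: the sum of the weights of all edges incident to `X`. -/
def vertexWeight (E : Finset (Finset α)) (W : Finset α → ℝ) (X : α) : ℝ :=
  ∑ e ∈ E.filter (fun e => X ∈ e), W e

/-- `W` is a fractional edge covering: edge weights lie in `[0,1]` and every
vertex of `V` has weight at least 1. -/
def IsFracEdgeCover (V : Finset α) (E : Finset (Finset α)) (W : Finset α → ℝ) : Prop :=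
  (∀ e ∈ E, 0 ≤ W e ∧ W e ≤ 1) ∧ ∀ X ∈ V, 1 ≤ vertexWeight E W X

/-- `W` is a fractional edge packing: edge weights lie in `[0,1]` and every
vertex of `V` has weight at most 1. -/
def IsFracEdgePack (V : Finset α) (E : Finset (Finset α)) (W : Finset α → ℝ) : Prop :=
  (∀ e ∈ E, 0 ≤ W e ∧ W e ≤ 1) ∧ ∀ X ∈ V, vertexWeight E W X ≤ 1

/-- The fractional edge covering number `ρ`: the smallest total weight of a
fractional edge covering. -/
noncomputable def rho (V : Finset α) (E : Finset (Finset α)) : ℝ :=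
  sInf {t | ∃ W : Finset α → ℝ, IsFracEdgeCover V E W ∧ t = ∑ e ∈ E, W e}

/-- The fractional edge packing number `τ`: the largest total weight of a
fractional edge packing. -/
noncomputable def tau (V : Finset α) (E : Finset (Finset α)) : ℝ :=
  sSup {t | ∃ W : Finset α → ℝ, IsFracEdgePack V E W ∧ t = ∑ e ∈ E, W e}

/-- A binary hypergraph: every edge is a 2-element subset of `V`, and every
vertex is incident to at least one edge. -/
def BinaryHG (V : Finset α) (E : Finset (Finset α)) : Prop :=
  (∀ e ∈ E, e ⊆ V ∧ e.card = 2) ∧ ∀ X ∈ V, ∃ e ∈ E, X ∈ e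


/-! ### Tuples, relations, and join queries

`dom` is the domain of values; a tuple over a set `U` of attributes is
represented as a function `att → Option dom` that is `some`-valued exactly
on `U`. -/

variable {att dom : Type}

/-- A (partial) tuple. -/
abbrev Tup (att dom : Type) := att → Option dom

/-- `u` is a tuple over the attribute set `U`. -/
def IsTupleOn (u : Tup att dom) (U : Set att) : Prop :=
  ∀ x : att, (u x).isSome ↔ x ∈ U

/-- The projection (restriction) of a tuple on an attribute set `V`. -/
noncomputable def restrict (u : Tup att dom) (V : Set att) : Tup att dom :=
  fun x => if x ∈ V then u x else none

/-- A relation: a finite set of tuples over a common scheme. -/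
structure Relation (att dom : Type) where
  scheme : Finset att
  tuples : Set (Tup att dom)
  finite : tuples.Finite
  wf : ∀ u ∈ tuples, IsTupleOn u ↑scheme

variable [DecidableEq att]

/-- A join query is a finite set of relations; `attset Q` is the set of all
attributes appearing in the schemes of its relations. -/
def attset (Q : Finset (Relation att dom)) : Finset att :=
  Q.biUnion fun R => R.scheme

/-- The result `Join(Q)` of a join query. -/
def JoinQ (Q : Finset (Relation att dom)) : Set (Tup att dom) :=
  { u | IsTupleOn u ↑(attset Q) ∧ ∀ R ∈ Q, restrict u ↑R.scheme ∈ R.tuples }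

/-- A query is simple if no two distinct relations share a scheme. -/
def SimpleQ (Q : Finset (Relation att dom)) : Prop :=
  ∀ R ∈ Q, ∀ S ∈ Q, R.scheme = S.scheme → R = S

/-- A query is binary if every relation's scheme has exactly two attributes. -/
def BinaryQ (Q : Finset (Relation att dom)) : Prop :=
  ∀ R ∈ Q, R.scheme.card = 2

/-- The input size `m` of a query. -/
noncomputable def inputSize (Q : Finset (Relation att dom)) : ℕ :=
  ∑ R ∈ Q, R.tuples.ncard

/-- The edge set of the hypergraph defined by `Q` (its vertex set is `attset Q`). -/
def edgeSet (Q : Finset (Relation att dom)) : Finset (Finset att) :=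
  Q.image fun R => R.scheme

/-! ### Heavy and light values -/

/-- Value `x` is heavy on attribute `X`: some relation of `Q` has at least
`m/λ` tuples carrying `x` on `X`. -/
def HeavyOn (Q : Finset (Relation att dom)) (lam : ℕ) (X : att) (x : dom) : Prop :=
  ∃ R ∈ Q, X ∈ R.scheme ∧
    (inputSize Q : ℝ) / (lam : ℝ) ≤ ({u ∈ R.tuples | u X = some x}.ncard : ℝ)

/-- Value `x` is heavy (on some attribute). -/
def Heavy (Q : Finset (Relation att dom)) (lam : ℕ) (x : dom) : Prop :=
  ∃ X : att, HeavyOn Q lam X x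

/-- Value `x` appears in at least one relation of `Q`. -/
def Appears (Q : Finset (Relation att dom)) (x : dom) : Prop :=
  ∃ R ∈ Q, ∃ X ∈ R.scheme, ∃ u ∈ R.tuples, u X = some x

/-- Value `x` appears on attribute `Y` in a relation of `Q`. -/
def AppearsOn (Q : Finset (Relation att dom)) (Y : att) (x : dom) : Prop :=
  ∃ R ∈ Q, Y ∈ R.scheme ∧ ∃ u ∈ R.tuples, u Y = some x

/-! ### Configurations and residual queries

Below, `Hv : att → dom → Prop` is the "heavy" predicate (`Hv X x` meaning
that value `x` is heavy on attribute `X`); in applications it is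
instantiated with `HeavyOn Q lam`. -/

/-- The set `config(Q, H)` of configurations of `H`: tuples over `H` whose
values are heavy. -/
def config (Hv : att → dom → Prop) (H : Finset att) : Set (Tup att dom) :=
  { η | IsTupleOn η ↑H ∧ ∀ X ∈ H, ∀ x : dom, η X = some x → Hv X x }

/-- The residual relation `R'ₑ(η)` (over `e \ H`) of the relation `R` with
scheme `e`, under configuration `η` of `H`: projections on `e \ H` of the
tuples of `R` that agree with `η` on `e ∩ H` and are light outside `H`. -/
def ResidualTuples (Q : Finset (Relation att dom)) (Hv : att → dom → Prop)
    (H : Finset att) (η : Tup att dom) (R : Relation att dom) : Set (Tup att dom) :=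
  { v | ∃ w ∈ R.tuples,
      (∀ X ∈ R.scheme ∩ H, w X = η X) ∧
      (∀ Y ∈ R.scheme \ H, ∀ y : dom, w Y = some y → ¬ Hv Y y ∧ Appears Q y) ∧
      v = restrict w ↑(R.scheme \ H) }

/-- The result of the residual query `Q'(η)`: tuples over `attset Q \ H`
whose projection on each active edge `e` belongs to `R'ₑ(η)`. -/
def JoinResidual (Q : Finset (Relation att dom)) (Hv : att → dom → Prop)
    (H : Finset att) (η : Tup att dom) : Set (Tup att dom) :=
  { u | IsTupleOn u ↑(attset Q \ H) ∧
      ∀ R ∈ Q, (R.scheme \ H).Nonempty →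
        restrict u ↑(R.scheme \ H) ∈ ResidualTuples Q Hv H η R }

/-- `m_η`: the total size of the relations of the residual query `Q'(η)`. -/
noncomputable def residualSize (Q : Finset (Relation att dom)) (Hv : att → dom → Prop)
    (H : Finset att) (η : Tup att dom) : ℕ :=
  ∑ R ∈ Q, if (R.scheme \ H).Nonempty then (ResidualTuples Q Hv H η R).ncard else 0

/-- Combine a tuple over a set disjoint from `H` with a configuration `η` over `H`. -/
def combine (H : Finset att) (η u : Tup att dom) : Tup att dom :=
  fun x => if x ∈ H then η x else u x

/-! ### Cross edges, isolated attributes, and the semi-join reduction -/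

/-- `e` is a cross edge w.r.t. `H`: it meets both `H` and its complement. -/
def IsCross (H : Finset att) (e : Finset att) : Prop :=
  (e ∩ H).Nonempty ∧ (e \ H).Nonempty

/-- The set `I` of isolated attributes: light attributes `X` such that `{X}`
is the only edge incident to `X` in the subgraph induced by the light
attributes `L = attset Q \ H`. -/
def isolatedSet (Q : Finset (Relation att dom)) (H : Finset att) : Finset att :=
  (attset Q \ H).filter fun X => ∀ R ∈ Q, X ∈ R.scheme → R.scheme \ H = {X}

/-- The unary tuple over `{X}` carrying value `x`. -/
def singletonTup (X : att) (x : dom) : Tup att dom :=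
  fun Y => if Y = X then some x else none

/-- `X` is a border attribute: a light attribute appearing in a cross edge. -/
def BorderAttr (Q : Finset (Relation att dom)) (H : Finset att) (X : att) : Prop :=
  X ∈ attset Q ∧ X ∉ H ∧ ∃ R ∈ Q, X ∈ R.scheme ∧ IsCross H R.scheme

/-- The set of values of the unary relation `R''_X(η)`: the intersection of
the residual relations `R'ₑ(η)` over all cross edges `e` containing `X`. -/
def Rpp (Q : Finset (Relation att dom)) (Hv : att → dom → Prop)
    (H : Finset att) (η : Tup att dom) (X : att) : Set dom :=
  { x | ∀ R ∈ Q, IsCross H R.scheme → X ∈ R.scheme →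
      singletonTup X x ∈ ResidualTuples Q Hv H η R }

/-- The cartesian product `Join(Q''_J(η))` of the unary relations `R''_X(η)`,
`X ∈ J` (for `J = I` this is `Join(Q''_isolated(η))`). -/
def JoinIso (Q : Finset (Relation att dom)) (Hv : att → dom → Prop)
    (H : Finset att) (η : Tup att dom) (J : Finset att) : Set (Tup att dom) :=
  { u | IsTupleOn u ↑J ∧ ∀ X ∈ J, ∀ x : dom, u X = some x → x ∈ Rpp Q Hv H η X }

/-! ### The query `Q*` and its hypergraph -/

/-- The result `Join(Q*)` of the query `Q*`: tuples over `I ∪ H` that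
(i) project into `R_e` for every cross edge `e` incident to `I`, (ii) take a
heavy value on every attribute of `H`, and (iii) take, on every `Y ∈ I`, a
value appearing on `Y` in a relation of `Q`. -/
def JoinStar (Q : Finset (Relation att dom)) (Hv : att → dom → Prop)
    (H : Finset att) : Set (Tup att dom) :=
  { t | IsTupleOn t ↑(isolatedSet Q H ∪ H) ∧
      (∀ R ∈ Q, IsCross H R.scheme → (R.scheme ∩ isolatedSet Q H).Nonempty →
        restrict t ↑R.scheme ∈ R.tuples) ∧
      (∀ X ∈ H, ∀ x : dom, t X = some x → Hv X x) ∧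
      (∀ Y ∈ isolatedSet Q H, ∀ y : dom, t Y = some y → AppearsOn Q Y y) }

/-- The edge set `E*` of the hypergraph `G*` of `Q*`: the cross edges of `G`
incident to `I`, a unary edge `{X}` for each `X ∈ H`, and a unary edge `{Y}`
for each `Y ∈ I`.  (Its vertex set is `V* = I ∪ H`.) -/
noncomputable def starEdges (Q : Finset (Relation att dom)) (H : Finset att) :
    Finset (Finset att) :=
  (edgeSet Q).filter (fun e => IsCross H e ∧ (e ∩ isolatedSet Q H).Nonempty)
    ∪ H.image (fun X => {X}) ∪ (isolatedSet Q H).image (fun Y => {Y})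

/-! ### The reduced query `Q''(η)` -/

/-- The reduced relation `R''ₑ(η)` of a light edge `e = scheme R`: the tuples
of `R'ₑ(η)` whose values on border attributes survive the semi-join
reduction. -/
def ReducedTuples (Q : Finset (Relation att dom)) (Hv : att → dom → Prop)
    (H : Finset att) (η : Tup att dom) (R : Relation att dom) : Set (Tup att dom) :=
  { u | u ∈ ResidualTuples Q Hv H η R ∧
      ∀ X ∈ R.scheme, BorderAttr Q H X → ∀ x : dom, u X = some x → x ∈ Rpp Q Hv H η X }

/-- The result `Join(Q''_light(η))`: tuples over `L \ I` whose projection on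
every light edge belongs to the corresponding reduced relation. -/
def JoinLight (Q : Finset (Relation att dom)) (Hv : att → dom → Prop)
    (H : Finset att) (η : Tup att dom) : Set (Tup att dom) :=
  { u | IsTupleOn u ↑((attset Q \ H) \ isolatedSet Q H) ∧
      ∀ R ∈ Q, R.scheme ∩ H = ∅ → restrict u ↑R.scheme ∈ ReducedTuples Q Hv H η R }

/-- The result `Join(Q''(η))` of the reduced query: tuples over `L` whose
projections on light edges are in the reduced relations and whose values on
isolated attributes are in the corresponding unary relations. -/
def JoinReduced (Q : Finset (Relation att dom)) (Hv : att → dom → Prop)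
    (H : Finset att) (η : Tup att dom) : Set (Tup att dom) :=
  { u | IsTupleOn u ↑(attset Q \ H) ∧
      (∀ R ∈ Q, R.scheme ∩ H = ∅ → restrict u ↑R.scheme ∈ ReducedTuples Q Hv H η R) ∧
      (∀ X ∈ isolatedSet Q H, ∀ x : dom, u X = some x → x ∈ Rpp Q Hv H η X) }

end BinaryJoins

/-! Because the query is binary, a cross edge `e` has exactly one light attribute `X`, so
`R'ₑ(η)` is a unary relation on `X` and the residual constraints on cross edges say precisely
that `u X ∈ R''_X(η)`. A light attribute that is not isolated lies on a light edge, where this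
is the semi-join condition of `R''ₑ(η)`; an isolated attribute lies on no light edge, so the
constraints of `Q''(η)` on `I` and on `L \ I` are independent. -/

lemma Finset.sdiff_eq_singleton_of_card_eq_two {α : Type*} [DecidableEq α] {s t : Finset α}
    (hs : s.card = 2) (hst : (s ∩ t).Nonempty) {x : α} (hx : x ∈ s) (hxt : x ∉ t) :
    s \ t = {x} := by
  have hcard : (s \ t).card ≤ 1 := by
    have := Finset.card_sdiff_add_card_inter s t
    have := hst.card_pos
    omega
  have hxst : x ∈ s \ t := Finset.mem_sdiff.2 ⟨hx, hxt⟩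
  exact Finset.eq_singleton_iff_unique_mem.2
    ⟨hxst, fun y hy => Finset.card_le_one.1 hcard y hy x hxst⟩

namespace BinaryJoins

variable {att dom : Type}

lemma isTupleOn_eq_none {u : Tup att dom} {U : Set att} (hu : IsTupleOn u U) {x : att}
    (hx : x ∉ U) : u x = none :=
  Option.not_isSome_iff_eq_none.1 fun h => hx ((hu x).1 h)

lemma isTupleOn_restrict {u : Tup att dom} {U V : Set att} (hu : IsTupleOn u U) (hVU : V ⊆ U) :
    IsTupleOn (restrict u V) V := by
  intro x
  by_cases hx : x ∈ V <;> simp [BinaryJoins.restrict, hx, (hu x).2 (hVU _)]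

lemma restrict_apply_of_mem (u : Tup att dom) {V : Set att} {x : att} (hx : x ∈ V) :
    restrict u V x = u x :=
  if_pos hx

lemma restrict_congr {u u' : Tup att dom} {V : Set att} (h : ∀ x ∈ V, u x = u' x) :
    restrict u V = restrict u' V := by
  funext x
  unfold restrict
  split_ifs with hx
  exacts [h x hx, rfl]

variable [DecidableEq att]

lemma isTupleOn_ite {u v : Tup att dom} {I J : Finset att} (hu : IsTupleOn u ↑I)
    (hv : IsTupleOn v ↑J) : IsTupleOn (fun x => if x ∈ I then u x else v x) ↑(I ∪ J) := by
  intro x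
  by_cases hx : x ∈ I <;> simp [hx, hu x, hv x]

lemma ite_restrict_restrict_sdiff {t : Tup att dom} {L : Finset att} (ht : IsTupleOn t ↑L)
    (I : Finset att) :
    (fun x => if x ∈ I then restrict t ↑I x else restrict t ↑(L \ I) x) = t := by
  funext x
  by_cases hxI : x ∈ I
  · simp [restrict, hxI]
  · by_cases hxL : x ∈ L
    · simp [restrict, hxI, hxL]
    · simp [restrict, hxI, hxL, isTupleOn_eq_none ht (Finset.mem_coe.not.2 hxL)]

lemma restrict_singleton_eq {u : Tup att dom} {X : att} {x : dom} (h : u X = some x) :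
    restrict u ↑({X} : Finset att) = singletonTup X x := by
  funext Y
  by_cases hY : Y = X
  · subst hY; simp [restrict, singletonTup, h]
  · simp [restrict, singletonTup, hY]

section Binary

variable {Q : Finset (Relation att dom)} {H : Finset att} {R : Relation att dom}

lemma mem_attset (hR : R ∈ Q) {X : att} (hX : X ∈ R.scheme) : X ∈ attset Q :=
  Finset.mem_biUnion.2 ⟨R, hR, hX⟩

lemma isolatedSet_subset : isolatedSet Q H ⊆ attset Q \ H :=
  Finset.filter_subset _ _

lemma scheme_sdiff_eq_singleton (hB : BinaryQ Q) (hR : R ∈ Q) (hRH : (R.scheme ∩ H).Nonempty)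
    {X : att} (hX : X ∈ R.scheme) (hXH : X ∉ H) : R.scheme \ H = {X} :=
  Finset.sdiff_eq_singleton_of_card_eq_two (hB R hR) hRH hX hXH

lemma scheme_sdiff_eq_self (hRH : R.scheme ∩ H = ∅) : R.scheme \ H = R.scheme :=
  Finset.sdiff_eq_self_of_disjoint (Finset.disjoint_iff_inter_eq_empty.2 hRH)

lemma scheme_subset_sdiff_isolatedSet (hB : BinaryQ Q) (hR : R ∈ Q) (hRH : R.scheme ∩ H = ∅) :
    R.scheme ⊆ (attset Q \ H) \ isolatedSet Q H := by
  intro X hX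
  have hXH : X ∉ H := fun h => by simpa [hRH] using Finset.mem_inter.2 ⟨hX, h⟩
  refine Finset.mem_sdiff.2 ⟨Finset.mem_sdiff.2 ⟨mem_attset hR hX, hXH⟩, fun hXI => ?_⟩
  have hsingle := (Finset.mem_filter.1 hXI).2 R hR hX
  rw [scheme_sdiff_eq_self hRH] at hsingle
  simpa [hsingle] using hB R hR

lemma exists_light_edge_of_not_mem_isolatedSet (hB : BinaryQ Q) {X : att}
    (hX : X ∈ attset Q \ H) (hXI : X ∉ isolatedSet Q H) :
    ∃ R ∈ Q, X ∈ R.scheme ∧ R.scheme ∩ H = ∅ := by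
  obtain ⟨R, hR, hXR, hne⟩ : ∃ R ∈ Q, X ∈ R.scheme ∧ R.scheme \ H ≠ {X} := by
    by_contra! hall
    exact hXI (Finset.mem_filter.2 ⟨hX, hall⟩)
  refine ⟨R, hR, hXR, Finset.not_nonempty_iff_eq_empty.1 fun hRH => hne ?_⟩
  exact scheme_sdiff_eq_singleton hB hR hRH hXR (Finset.mem_sdiff.1 hX).2

variable {Hv : att → dom → Prop} {η : Tup att dom}

lemma mem_Rpp_iff (hB : BinaryQ Q) {u : Tup att dom} {X : att} {x : dom} (hXH : X ∉ H)
    (hux : u X = some x) :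
    x ∈ Rpp Q Hv H η X ↔ ∀ R ∈ Q, IsCross H R.scheme → X ∈ R.scheme →
      restrict u ↑(R.scheme \ H) ∈ ResidualTuples Q Hv H η R := by
  refine forall₂_congr fun R hR => forall₂_congr fun hRc hXR => ?_
  rw [scheme_sdiff_eq_singleton hB hR hRc.1 hXR hXH, restrict_singleton_eq hux]

lemma mem_Rpp_of_mem_joinResidual (hB : BinaryQ Q) {u : Tup att dom}
    (hu : u ∈ JoinResidual Q Hv H η) {X : att} (hXH : X ∉ H) {x : dom} (hux : u X = some x) :
    x ∈ Rpp Q Hv H η X :=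
  (mem_Rpp_iff hB hXH hux).2 fun R hR hRc _ => hu.2 R hR hRc.2

lemma mem_Rpp_of_mem_joinReduced (hB : BinaryQ Q) {u : Tup att dom}
    (hu : u ∈ JoinReduced Q Hv H η) (hR : R ∈ Q) (hRc : IsCross H R.scheme) {X : att}
    (hX : X ∈ R.scheme \ H) {x : dom} (hux : u X = some x) : x ∈ Rpp Q Hv H η X := by
  obtain ⟨hXR, hXH⟩ := Finset.mem_sdiff.1 hX
  have hXL : X ∈ attset Q \ H := Finset.mem_sdiff.2 ⟨mem_attset hR hXR, hXH⟩
  by_cases hXI : X ∈ isolatedSet Q H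
  · exact hu.2.2 X hXI x hux
  obtain ⟨R₀, hR₀, hXR₀, hR₀H⟩ := exists_light_edge_of_not_mem_isolatedSet hB hXL hXI
  have hborder : BorderAttr Q H X := ⟨mem_attset hR hXR, hXH, R, hR, hXR, hRc⟩
  exact (hu.2.1 R₀ hR₀ hR₀H).2 X hXR₀ hborder x
    (by rw [restrict_apply_of_mem u (Finset.mem_coe.2 hXR₀), hux])

lemma joinResidual_eq_joinReduced (hB : BinaryQ Q) :
    JoinResidual Q Hv H η = JoinReduced Q Hv H η := by
  ext u
  constructor
  · intro hu
    refine ⟨hu.1, fun R hR hRH => ⟨?_, ?_⟩, fun X hXI x hux => ?_⟩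
    · have hne : (R.scheme \ H).Nonempty := Finset.card_pos.1 (by
        rw [scheme_sdiff_eq_self hRH, hB R hR]; norm_num)
      simpa [scheme_sdiff_eq_self hRH] using hu.2 R hR hne
    · intro X hXR hborder x hux
      rw [restrict_apply_of_mem u (Finset.mem_coe.2 hXR)] at hux
      exact mem_Rpp_of_mem_joinResidual hB hu hborder.2.1 hux
    · exact mem_Rpp_of_mem_joinResidual hB hu (Finset.mem_sdiff.1 (isolatedSet_subset hXI)).2 hux
  · intro hu
    refine ⟨hu.1, fun R hR ⟨X, hX⟩ => ?_⟩
    by_cases hRH : R.scheme ∩ H = ∅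
    · simpa [scheme_sdiff_eq_self hRH] using (hu.2.1 R hR hRH).1
    have hRc : IsCross H R.scheme := ⟨Finset.nonempty_iff_ne_empty.2 hRH, X, hX⟩
    obtain ⟨x, hux⟩ := Option.isSome_iff_exists.1 ((hu.1 X).2 (by
      simpa using ⟨mem_attset hR (Finset.mem_sdiff.1 hX).1, (Finset.mem_sdiff.1 hX).2⟩))
    exact (mem_Rpp_iff hB (Finset.mem_sdiff.1 hX).2 hux).1
      (mem_Rpp_of_mem_joinReduced hB hu hR hRc hX hux) R hR hRc (Finset.mem_sdiff.1 hX).1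

lemma joinReduced_eq_product (hB : BinaryQ Q) :
    JoinReduced Q Hv H η = { t : Tup att dom |
      ∃ u ∈ JoinIso Q Hv H η (isolatedSet Q H), ∃ v ∈ JoinLight Q Hv H η,
        t = fun x => if x ∈ isolatedSet Q H then u x else v x } := by
  ext t
  constructor
  · rintro ⟨ht, hlight, hiso⟩
    refine ⟨restrict t ↑(isolatedSet Q H),
      ⟨isTupleOn_restrict ht (Finset.coe_subset.2 isolatedSet_subset),
        fun X hX x hx => hiso X hX x
          (by rwa [restrict_apply_of_mem t (Finset.mem_coe.2 hX)] at hx)⟩,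
      restrict t ↑((attset Q \ H) \ isolatedSet Q H),
      ⟨isTupleOn_restrict ht (Finset.coe_subset.2 Finset.sdiff_subset), fun R hR hRH => ?_⟩,
      (ite_restrict_restrict_sdiff ht _).symm⟩
    rw [restrict_congr fun y hy =>
      restrict_apply_of_mem t (Finset.mem_coe.2 (scheme_subset_sdiff_isolatedSet hB hR hRH hy))]
    exact hlight R hR hRH
  · rintro ⟨u, ⟨hu, hiso⟩, v, ⟨hv, hlight⟩, rfl⟩
    refine ⟨?_, fun R hR hRH => ?_, fun X hX x hx => hiso X hX x (by simpa [hX] using hx)⟩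
    · simpa [Finset.union_sdiff_of_subset isolatedSet_subset] using isTupleOn_ite hu hv
    · rw [restrict_congr fun y hy =>
        if_neg (Finset.mem_sdiff.1 (scheme_subset_sdiff_isolatedSet hB hR hRH hy)).2]
      exact hlight R hR hRH

end Binary

theorem residual_eq_reduced_eq_product_general
    (Q : Finset (Relation att dom)) (hB : BinaryQ Q)
    (lam : ℕ)
    (H : Finset att)
    (η : Tup att dom) :
    JoinResidual Q (HeavyOn Q lam) H η = JoinReduced Q (HeavyOn Q lam) H η ∧
    JoinReduced Q (HeavyOn Q lam) H η
      = { t : Tup att dom |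
          ∃ u ∈ JoinIso Q (HeavyOn Q lam) H η (isolatedSet Q H),
            ∃ v ∈ JoinLight Q (HeavyOn Q lam) H η,
              t = fun x => if x ∈ isolatedSet Q H then u x else v x } :=
  ⟨joinResidual_eq_joinReduced hB, joinReduced_eq_product hB⟩

/-- For a simple binary join query `Q` with input size
`m`, `λ ∈ [1, m]`, `H ⊆ attset Q` and any configuration
`η ∈ config(Q, H)`:
`Join(Q'(η)) = Join(Q''(η)) = Join(Q''_isolated(η)) × Join(Q''_light(η))`,
where the last set consists of the tuples over `L` combining a tuple of
`Join(Q''_isolated(η))` (over `I`) with a tuple of `Join(Q''_light(η))`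
(over `L \ I`). -/
theorem residual_eq_reduced_eq_product [Finite att] [Countable dom] [Infinite dom]
    (Q : Finset (Relation att dom)) (hS : SimpleQ Q) (hB : BinaryQ Q)
    (lam : ℕ) (hlam1 : 1 ≤ lam) (hlam2 : lam ≤ inputSize Q)
    (H : Finset att) (hH : H ⊆ attset Q)
    (η : Tup att dom) (hη : η ∈ config (HeavyOn Q lam) H) :
    JoinResidual Q (HeavyOn Q lam) H η = JoinReduced Q (HeavyOn Q lam) H η ∧
    JoinReduced Q (HeavyOn Q lam) H η
      = { t : Tup att dom |
          ∃ u ∈ JoinIso Q (HeavyOn Q lam) H η (isolatedSet Q H),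
            ∃ v ∈ JoinLight Q (HeavyOn Q lam) H η,
              t = fun x => if x ∈ isolatedSet Q H then u x else v x } :=
  residual_eq_reduced_eq_product_general Q hB lam H η

end BinaryJoins
end

section
/- Let Q be a simple binary join query, H ⊆ attset(Q), I the set of isolated attributes, and J a non-empty subset of I. Define Q̃ = {R ∈ Q : scheme(R) ∩ (I \ J) = ∅} and H̃ = H ∩ attset(Q̃). Then (i) for each configuration η ∈ config(Q, H), the restriction η̃ = η[H̃] belongs to config(Q̃, H̃) and Join(Q''_J(η)) = Join(Q̃''_isolated(η̃)), where Q̃''_isolated(η̃) is the query on the isolated attributes (which equal J) defined from Q̃ and H̃; and (ii) at most λ^{|H| − |H̃|} configurations η ∈ config(Q, H) have the same restriction η̃, so that Σ_{η ∈ config(Q, H)} |Join(Q''_J(η))| ≤ λ^{|H| − |H̃|} · Σ_{η̃ ∈ config(Q̃, H̃)} |Join(Q̃''_isolated(η̃))|. -/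
/-!
A relation containing an attribute `X ∈ J` has `X` as its only light attribute, so it avoids
`I \ J` and is kept in `Q̃`; all its heavy attributes then lie in `H̃`. Hence the residual
relations that define `R''_X(η)` see only `η[H̃]`, and the isolated attributes of `(Q̃, H̃)` are
exactly `J`. For the count, a configuration with a given restriction is determined by its values
on `H \ H̃`, and each attribute has at most `λ` heavy values: distinct heavy values on `X` are
carried by disjoint sets of at least `m/λ` tuples.
-/

open scoped BigOperators Classical

namespace BinaryJoins

lemma sum_ncard_fiber_le {α β : Type*} {T : Set α} (hT : T.Finite) (f : α → β)
    (s : Finset β) :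
    ∑ b ∈ s, {a ∈ T | f a = b}.ncard ≤ T.ncard := by
  have hfiber : ∀ b, {a ∈ T | f a = b} = ↑({a ∈ hT.toFinset | f a = b}) := fun b => by
    ext a; simp
  simp only [hfiber, Set.ncard_coe_finset, Set.ncard_eq_toFinset_card T hT]
  calc _ = ({a ∈ hT.toFinset | f a ∈ s} : Finset α).card := by
        convert Finset.sum_card_fiberwise_eq_card_filter _ _ _
    _ ≤ _ := Finset.card_filter_le _ _

lemma finsum_mem_comp_le_mul {α β : Type*} {A : Set α} {B : Set β} (hA : A.Finite)
    (hB : B.Finite) {r : α → β} (hr : Set.MapsTo r A B) {c : ℕ}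
    (hc : ∀ b ∈ B, {a ∈ A | r a = b}.ncard ≤ c) (g : β → ℕ) :
    ∑ᶠ a ∈ A, g (r a) ≤ c * ∑ᶠ b ∈ B, g b := by
  lift A to Finset α using hA
  lift B to Finset β using hB
  simp only [finsum_mem_coe_finset, Finset.mul_sum]
  rw [← Finset.sum_fiberwise_of_maps_to hr]
  refine Finset.sum_le_sum fun b hb => ?_
  rw [Finset.sum_congr rfl fun a ha => by rw [(Finset.mem_filter.mp ha).2], Finset.sum_const,
    smul_eq_mul]
  gcongr
  simpa [← Finset.coe_filter] using hc b hb

variable {att dom : Type}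

lemma appears_of_mem_tuples {Q : Finset (Relation att dom)} {R : Relation att dom} (hR : R ∈ Q)
    {Y : att} (hY : Y ∈ R.scheme) {w : Tup att dom} (hw : w ∈ R.tuples) {y : dom}
    (hwy : w Y = some y) : Appears Q y :=
  ⟨R, hR, Y, hY, w, hw, hwy⟩

lemma card_le_of_forall_heavyOn {Q : Finset (Relation att dom)} {lam : ℕ} (hlam : 0 < lam)
    (hm : 0 < inputSize Q) {X : att} {s : Finset dom} (hs : ∀ x ∈ s, HeavyOn Q lam X x) :
    s.card ≤ lam := by
  set N : Relation att dom → dom → ℕ := fun R x => {u ∈ R.tuples | u X = some x}.ncard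
  have hN : ∀ R, ∑ x ∈ s, N R x ≤ R.tuples.ncard := fun R => by
    simpa [N, Finset.sum_map] using
      sum_ncard_fiber_le R.finite (fun u => u X) (s.map Function.Embedding.some)
  have hlow : ∀ x ∈ s, (inputSize Q : ℝ) / lam ≤ ∑ R ∈ Q, N R x := fun x hx => by
    obtain ⟨R, hR, -, hle⟩ := hs x hx
    have hR' : N R x ≤ ∑ R ∈ Q, N R x :=
      Finset.single_le_sum (f := fun R => N R x) (fun _ _ => Nat.zero_le _) hR
    exact hle.trans (by exact_mod_cast hR')
  have hsum : (s.card : ℝ) * (inputSize Q / lam) ≤ inputSize Q := calc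
    (s.card : ℝ) * (inputSize Q / lam) ≤ ∑ x ∈ s, ∑ R ∈ Q, (N R x : ℝ) := by
      simpa using Finset.sum_le_sum hlow
    _ = ∑ R ∈ Q, ∑ x ∈ s, (N R x : ℝ) := Finset.sum_comm
    _ ≤ inputSize Q := by
      unfold inputSize; push_cast
      exact Finset.sum_le_sum fun R _ => by exact_mod_cast hN R
  have hm' : (0 : ℝ) < inputSize Q := by exact_mod_cast hm
  have hlam' : (0 : ℝ) < lam := by exact_mod_cast hlam
  rw [mul_div_assoc', div_le_iff₀ hlam', mul_comm (inputSize Q : ℝ)] at hsum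
  exact_mod_cast le_of_mul_le_mul_right hsum hm'

lemma exists_finset_heavyOn {Q : Finset (Relation att dom)} {lam : ℕ} (hlam : 0 < lam)
    (hm : 0 < inputSize Q) (X : att) :
    ∃ s : Finset dom, s.card ≤ lam ∧ ∀ x, HeavyOn Q lam X x → x ∈ s := by
  have hfin : {x | HeavyOn Q lam X x}.Finite := by
    by_contra hinf
    obtain ⟨t, hts, htcard⟩ := Set.Infinite.exists_subset_card_eq hinf (lam + 1)
    have := card_le_of_forall_heavyOn hlam hm fun x hx => hts hx
    omega
  exact ⟨hfin.toFinset, card_le_of_forall_heavyOn hlam hm (X := X) (by simp),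
    fun x hx => by simpa using hx⟩

section Configurations

variable {Hv : att → dom → Prop} {lam : ℕ} {H Ht : Finset att}

lemma restrict_mem_config (hHt : Ht ⊆ H) {η : Tup att dom} (hη : η ∈ config Hv H) :
    restrict η ↑Ht ∈ config Hv Ht := by
  obtain ⟨hdom, hheavy⟩ := hη
  refine ⟨fun X => ?_, fun X hX x hx => ?_⟩
  · by_cases hX : X ∈ Ht
    · simp [restrict, hX, hdom X, hHt hX]
    · simp [restrict, hX]
  · simp only [restrict, Finset.mem_coe, hX, if_true] at hx
    exact hheavy X (hHt hX) x hx

lemma exists_finset_config_fiber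
    (hHv : ∀ X, ∃ s : Finset dom, s.card ≤ lam ∧ ∀ x, Hv X x → x ∈ s)
    (hHt : Ht ⊆ H) (ηt : Tup att dom) :
    ∃ F : Finset (Tup att dom), F.card ≤ lam ^ (H.card - Ht.card) ∧
      {η ∈ config Hv H | restrict η ↑Ht = ηt} ⊆ ↑F := by
  choose S hScard hS using hHv
  let extend : ((X : ↥(H \ Ht)) → dom) → Tup att dom :=
    fun f Y => if hY : Y ∈ H \ Ht then some (f ⟨Y, hY⟩) else ηt Y
  refine ⟨(Fintype.piFinset fun X : ↥(H \ Ht) => S X).image extend, ?_, ?_⟩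
  · calc _ ≤ (Fintype.piFinset fun X : ↥(H \ Ht) => S X).card := Finset.card_image_le
      _ = ∏ X : ↥(H \ Ht), (S X).card := Fintype.card_piFinset _
      _ ≤ ∏ _X : ↥(H \ Ht), lam := Finset.prod_le_prod' fun X _ => hScard X
      _ = lam ^ (H.card - Ht.card) := by simp [Finset.card_sdiff_of_subset hHt]
  · rintro η ⟨⟨hdom, hheavy⟩, rfl⟩
    have hsome : ∀ X ∈ H, (η X).isSome := fun X hX => (hdom X).2 hX
    refine Finset.mem_image.2 ⟨fun X => (η X).get (hsome X (Finset.mem_sdiff.1 X.2).1), ?_, ?_⟩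
    · simp only [Fintype.mem_piFinset]
      intro X
      exact hS X _ (hheavy X (Finset.mem_sdiff.1 X.2).1 _ (by simp))
    · funext Y
      by_cases hYHt : Y ∈ Ht
      · simp [extend, restrict, hYHt]
      by_cases hYH : Y ∈ H
      · simp [extend, hYH, hYHt]
      have hnone : η Y = none := Option.not_isSome_iff_eq_none.1 fun h => hYH ((hdom Y).1 h)
      simp [extend, restrict, hYH, hYHt, hnone]

lemma config_finite (hHv : ∀ X, ∃ s : Finset dom, s.card ≤ lam ∧ ∀ x, Hv X x → x ∈ s)
    (H : Finset att) : (config Hv H).Finite := by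
  obtain ⟨F, -, hF⟩ := exists_finset_config_fiber hHv (Finset.empty_subset H) (fun _ => none)
  refine F.finite_toSet.subset fun η hη => hF ⟨hη, ?_⟩
  funext X
  simp [restrict]

lemma ncard_config_fiber_le
    (hHv : ∀ X, ∃ s : Finset dom, s.card ≤ lam ∧ ∀ x, Hv X x → x ∈ s)
    (hHt : Ht ⊆ H) (ηt : Tup att dom) :
    {η ∈ config Hv H | restrict η ↑Ht = ηt}.ncard ≤ lam ^ (H.card - Ht.card) := by
  obtain ⟨F, hFcard, hF⟩ := exists_finset_config_fiber hHv hHt ηt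
  exact (Set.ncard_le_ncard hF F.finite_toSet).trans (by simpa using hFcard)

end Configurations

section Subquery

variable [DecidableEq att] {Hv : att → dom → Prop} {Q Qt : Finset (Relation att dom)}
  {R : Relation att dom} {H J : Finset att} {X : att}

def avoiding (Q : Finset (Relation att dom)) (K : Finset att) : Finset (Relation att dom) :=
  Q.filter fun R => R.scheme ∩ K = ∅

lemma scheme_subset_attset (hR : R ∈ Q) : R.scheme ⊆ attset Q :=
  Finset.subset_biUnion_of_mem _ hR

lemma scheme_inter_inter_attset (hR : R ∈ Q) :
    R.scheme ∩ (H ∩ attset Q) = R.scheme ∩ H := by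
  have := scheme_subset_attset hR
  ext; simp only [Finset.mem_inter]; grind

lemma scheme_sdiff_inter_attset (hR : R ∈ Q) :
    R.scheme \ (H ∩ attset Q) = R.scheme \ H := by
  have := scheme_subset_attset hR
  ext; simp only [Finset.mem_inter, Finset.mem_sdiff]; grind

lemma isCross_inter_attset (hR : R ∈ Q) :
    IsCross (H ∩ attset Q) R.scheme ↔ IsCross H R.scheme := by
  rw [IsCross, IsCross, scheme_inter_inter_attset hR, scheme_sdiff_inter_attset hR]

lemma residualTuples_subquery (hQ : Qt ⊆ Q) (hR : R ∈ Qt) {η η' : Tup att dom}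
    (hη : ∀ Y ∈ H ∩ attset Qt, η' Y = η Y) :
    ResidualTuples Qt Hv (H ∩ attset Qt) η' R = ResidualTuples Q Hv H η R := by
  ext v
  simp only [ResidualTuples, scheme_inter_inter_attset hR, scheme_sdiff_inter_attset hR,
    Set.mem_ofPred_eq]
  have hηR : ∀ Y ∈ R.scheme ∩ H, η' Y = η Y := fun Y hY =>
    hη Y (Finset.mem_inter.1 ((scheme_inter_inter_attset hR).symm ▸ hY)).2
  refine exists_congr fun w => and_congr_right fun hw =>
    and_congr (forall₂_congr fun Y hY => by rw [hηR Y hY])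
      (and_congr_left' (forall₂_congr fun Y hY => forall₂_congr fun y hy => ?_))
  have hYR := (Finset.mem_sdiff.1 hY).1
  simp only [appears_of_mem_tuples hR hYR hw hy, appears_of_mem_tuples (hQ hR) hYR hw hy]

lemma rpp_subquery (hQ : Qt ⊆ Q) (hX : ∀ R ∈ Q, X ∈ R.scheme → R ∈ Qt)
    {η η' : Tup att dom} (hη : ∀ Y ∈ H ∩ attset Qt, η' Y = η Y) :
    Rpp Qt Hv (H ∩ attset Qt) η' X = Rpp Q Hv H η X := by
  ext x
  simp only [Rpp, Set.mem_ofPred_eq]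
  constructor
  · intro h R hR hcross hXR
    rw [← residualTuples_subquery hQ (hX R hR hXR) hη]
    exact h R (hX R hR hXR) ((isCross_inter_attset (hX R hR hXR)).2 hcross) hXR
  · intro h R hR hcross hXR
    rw [residualTuples_subquery hQ hR hη]
    exact h R (hQ hR) ((isCross_inter_attset hR).1 hcross) hXR

lemma joinIso_subquery (hQ : Qt ⊆ Q) (hJ : ∀ X ∈ J, ∀ R ∈ Q, X ∈ R.scheme → R ∈ Qt)
    {η η' : Tup att dom} (hη : ∀ Y ∈ H ∩ attset Qt, η' Y = η Y) :
    JoinIso Qt Hv (H ∩ attset Qt) η' J = JoinIso Q Hv H η J := by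
  ext u
  simp only [JoinIso, Set.mem_ofPred_eq]
  refine and_congr_right fun _ => forall₂_congr fun X hX => ?_
  rw [rpp_subquery hQ (hJ X hX) hη]

lemma mem_isolatedSet : X ∈ isolatedSet Q H ↔
    X ∈ attset Q ∧ X ∉ H ∧ ∀ R ∈ Q, X ∈ R.scheme → R.scheme \ H = {X} := by
  simp [isolatedSet, and_assoc]

lemma mem_avoiding_of_mem_scheme (hJ : J ⊆ isolatedSet Q H) (hX : X ∈ J) (hR : R ∈ Q)
    (hXR : X ∈ R.scheme) : R ∈ avoiding Q (isolatedSet Q H \ J) := by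
  refine Finset.mem_filter.2 ⟨hR, Finset.eq_empty_of_forall_notMem fun Y hY => ?_⟩
  obtain ⟨hYR, hYI, hYJ⟩ : Y ∈ R.scheme ∧ Y ∈ isolatedSet Q H ∧ Y ∉ J := by
    simpa using hY
  have hYL : Y ∈ R.scheme \ H := Finset.mem_sdiff.2 ⟨hYR, (mem_isolatedSet.1 hYI).2.1⟩
  rw [(mem_isolatedSet.1 (hJ hX)).2.2 R hR hXR, Finset.mem_singleton] at hYL
  exact hYJ (hYL ▸ hX)

lemma isolatedSet_avoiding (hJ : J ⊆ isolatedSet Q H) :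
    isolatedSet (avoiding Q (isolatedSet Q H \ J)) (H ∩ attset (avoiding Q (isolatedSet Q H \ J)))
      = J := by
  set Qt := avoiding Q (isolatedSet Q H \ J)
  have hQt : Qt ⊆ Q := Finset.filter_subset _ _
  ext X
  constructor
  · intro hX
    obtain ⟨hXQt, hXHt, hiso⟩ := mem_isolatedSet.1 hX
    have hXH : X ∉ H := fun h => hXHt (Finset.mem_inter.2 ⟨h, hXQt⟩)
    have hXI : X ∈ isolatedSet Q H := by
      refine mem_isolatedSet.2 ⟨Finset.biUnion_subset_biUnion_of_subset_left _ hQt hXQt, hXH,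
        fun S hS hXS => ?_⟩
      by_cases hSQt : S ∈ Qt
      · rw [← scheme_sdiff_inter_attset hSQt]
        exact hiso S hSQt hXS
      · -- `S` meets `isolatedSet Q H \ J` in some `W`, and `S \ H = {W}` forces `W = X`
        obtain ⟨W, hW⟩ :=
          Finset.nonempty_iff_ne_empty.2 fun h => hSQt (Finset.mem_filter.2 ⟨hS, h⟩)
        obtain ⟨hWS, hWI, -⟩ : W ∈ S.scheme ∧ W ∈ isolatedSet Q H ∧ W ∉ J := by
          simpa using hW
        have hSW := (mem_isolatedSet.1 hWI).2.2 S hS hWS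
        have hXW : X ∈ S.scheme \ H := Finset.mem_sdiff.2 ⟨hXS, hXH⟩
        rw [hSW, Finset.mem_singleton] at hXW
        rw [hSW, hXW]
    obtain ⟨R₀, hR₀, hXR₀⟩ := Finset.mem_biUnion.1 hXQt
    by_contra hXJ
    have hmem : X ∈ R₀.scheme ∩ (isolatedSet Q H \ J) := by simp [hXR₀, hXI, hXJ]
    rw [(Finset.mem_filter.1 hR₀).2] at hmem
    exact Finset.notMem_empty X hmem
  · intro hXJ
    obtain ⟨hXQ, hXH, hiso⟩ := mem_isolatedSet.1 (hJ hXJ)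
    obtain ⟨R, hR, hXR⟩ := Finset.mem_biUnion.1 hXQ
    have hRQt := mem_avoiding_of_mem_scheme hJ hXJ hR hXR
    refine mem_isolatedSet.2 ⟨Finset.mem_biUnion.2 ⟨R, hRQt, hXR⟩,
      fun h => hXH (Finset.mem_inter.1 h).1, fun S hS hXS => ?_⟩
    rw [scheme_sdiff_inter_attset hS]
    exact hiso S (hQt hS) hXS

end Subquery

variable [DecidableEq att]

theorem reduction_to_subquery_general
    (Q : Finset (Relation att dom))
    (lam : ℕ) (hlam1 : 1 ≤ lam) (hlam2 : lam ≤ inputSize Q)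
    (H : Finset att)
    (J : Finset att) (hJ : J ⊆ isolatedSet Q H)
    (Qt : Finset (Relation att dom))
    (hQt : Qt = Q.filter fun R => R.scheme ∩ (isolatedSet Q H \ J) = ∅)
    (Ht : Finset att) (hHt : Ht = H ∩ attset Qt) :
    (∀ η ∈ config (HeavyOn Q lam) H,
        restrict η ↑Ht ∈ config (HeavyOn Q lam) Ht ∧
        JoinIso Q (HeavyOn Q lam) H η J
          = JoinIso Qt (HeavyOn Q lam) Ht (restrict η ↑Ht) (isolatedSet Qt Ht)) ∧
    (∀ ηt ∈ config (HeavyOn Q lam) Ht,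
        {η ∈ config (HeavyOn Q lam) H | restrict η ↑Ht = ηt}.ncard
          ≤ lam ^ (H.card - Ht.card)) ∧
    (∑ᶠ η ∈ config (HeavyOn Q lam) H, (JoinIso Q (HeavyOn Q lam) H η J).ncard)
      ≤ lam ^ (H.card - Ht.card)
          * ∑ᶠ ηt ∈ config (HeavyOn Q lam) Ht,
              (JoinIso Qt (HeavyOn Q lam) Ht ηt (isolatedSet Qt Ht)).ncard := by
  have hheavy := exists_finset_heavyOn hlam1 (hlam1.trans hlam2)
  have hsub : Ht ⊆ H := hHt ▸ Finset.inter_subset_left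
  have hjoin : ∀ η, JoinIso Q (HeavyOn Q lam) H η J
      = JoinIso Qt (HeavyOn Q lam) Ht (restrict η ↑Ht) (isolatedSet Qt Ht) := fun η => by
    change Qt = avoiding Q _ at hQt
    subst hQt hHt
    rw [isolatedSet_avoiding hJ]
    exact (joinIso_subquery (Finset.filter_subset _ _)
      (fun X hX R hR hXR => mem_avoiding_of_mem_scheme hJ hX hR hXR) fun Y hY => if_pos hY).symm
  have hfiber := ncard_config_fiber_le hheavy hsub
  refine ⟨fun η hη => ⟨restrict_mem_config hsub hη, hjoin η⟩, fun ηt _ => hfiber ηt, ?_⟩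
  simp only [hjoin]
  exact finsum_mem_comp_le_mul (config_finite hheavy H) (config_finite hheavy Ht)
    (fun η hη => restrict_mem_config hsub hη) (fun ηt _ => hfiber ηt)
    fun ηt => (JoinIso Qt (HeavyOn Q lam) Ht ηt (isolatedSet Qt Ht)).ncard

/-- Let `Q` be a simple binary join query, `H ⊆ attset Q`,
`I` the set of isolated attributes, `J ⊆ I` non-empty,
`Q̃ = {R ∈ Q : scheme(R) ∩ (I \ J) = ∅}` and `H̃ = H ∩ attset Q̃`
(heaviness for `Q̃` taken with the same thresholds as for `Q`).  Then:
(i) for each `η ∈ config(Q, H)`, the restriction `η̃ = η[H̃]` belongs to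
`config(Q̃, H̃)` and `Join(Q''_J(η)) = Join(Q̃''_isolated(η̃))`;
(ii) at most `λ^{|H| − |H̃|}` configurations `η` share the same restriction
`η̃`, so that
`Σ_{η} |Join(Q''_J(η))| ≤ λ^{|H| − |H̃|} · Σ_{η̃} |Join(Q̃''_isolated(η̃))|`. -/
theorem reduction_to_subquery [Finite att] [Countable dom] [Infinite dom]
    (Q : Finset (Relation att dom)) (hS : SimpleQ Q) (hB : BinaryQ Q)
    (lam : ℕ) (hlam1 : 1 ≤ lam) (hlam2 : lam ≤ inputSize Q)
    (H : Finset att) (hH : H ⊆ attset Q)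
    (J : Finset att) (hJ : J ⊆ isolatedSet Q H) (hJne : J.Nonempty)
    (Qt : Finset (Relation att dom))
    (hQt : Qt = Q.filter fun R => R.scheme ∩ (isolatedSet Q H \ J) = ∅)
    (Ht : Finset att) (hHt : Ht = H ∩ attset Qt) :
    (∀ η ∈ config (HeavyOn Q lam) H,
        restrict η ↑Ht ∈ config (HeavyOn Q lam) Ht ∧
        JoinIso Q (HeavyOn Q lam) H η J
          = JoinIso Qt (HeavyOn Q lam) Ht (restrict η ↑Ht) (isolatedSet Qt Ht)) ∧
    (∀ ηt ∈ config (HeavyOn Q lam) Ht,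
        {η ∈ config (HeavyOn Q lam) H | restrict η ↑Ht = ηt}.ncard
          ≤ lam ^ (H.card - Ht.card)) ∧
    (∑ᶠ η ∈ config (HeavyOn Q lam) H, (JoinIso Q (HeavyOn Q lam) H η J).ncard)
      ≤ lam ^ (H.card - Ht.card)
          * ∑ᶠ ηt ∈ config (HeavyOn Q lam) Ht,
              (JoinIso Qt (HeavyOn Q lam) Ht ηt (isolatedSet Qt Ht)).ncard :=
  reduction_to_subquery_general Q lam hlam1 hlam2 H J hJ Qt hQt Ht hHt

end BinaryJoins
end
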